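/- arXiv:1010.0163 — 2 statements merged into one kernel-verified Lean document; each statement's English description precedes it below -/
import Mathlib

section
/- The interior A° of a Rees algebra A, defined degreewise by A°_0 = O_W, A°_1 = A_1, and for i>1, A°_i = { f ∈ A_i : Δ(f) ⊆ A°_{i-1} }, is the largest Villamayor algebra contained in A; equivalently it equals the Villamayor algebra generated by all Villamayor algebras B ⊆ A. -/
/-- `Δ(I)`: the ideal generated by `I` together with all first-order derivatives
of sections of `I` (over the base `k`). -/
noncomputable def deltaIdeal (k : Type*) {R : Type*} [CommRing k] [CommRing R] [Algebra k R]
    (I : Ideal R) : Ideal R :=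
  I ⊔ Ideal.span {x | ∃ (D : Derivation k R R) (a : R), a ∈ I ∧ D a = x}

/-- A Villamayor algebra: a Rees algebra `A` with `A 0 = ⊤` and
`Δ(A_{i+1}) ⊆ A_i` for all `i ≥ 0`. -/
def IsVillamayor (k : Type*) {R : Type*} [CommRing k] [CommRing R] [Algebra k R]
    (A : ℕ → Ideal R) : Prop :=
  A 0 = ⊤ ∧ (∀ i j, A i * A j ≤ A (i + j)) ∧ ∀ i : ℕ, deltaIdeal k (A (i + 1)) ≤ A i

/-!
`Δ` is left adjoint to `K ↦ {f ∈ K | D f ∈ K for every derivation D}`, so the condition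
`Δ(f) ⊆ A°ᵢ₋₁` cuts out an ideal and the Villamayor condition holds for `A°` by
construction; any Villamayor `C ⊆ A` lies in `A°` by induction on the degree.
Multiplicativity of `A°` follows, by induction on `i + j`, from the Leibniz rule
`Δ(I J) ⊆ I Δ(J) + Δ(I) J`.
-/

section Delta

variable (k : Type*) {R : Type*} [CommRing k] [CommRing R] [Algebra k R]

def deltaCore (K : Ideal R) : Ideal R where
  carrier := {f | f ∈ K ∧ ∀ D : Derivation k R R, D f ∈ K}
  zero_mem' := ⟨K.zero_mem, fun D => by simp⟩
  add_mem' := by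
    rintro a b ⟨ha, hDa⟩ ⟨hb, hDb⟩
    exact ⟨K.add_mem ha hb, fun D => by rw [map_add]; exact K.add_mem (hDa D) (hDb D)⟩
  smul_mem' := by
    rintro c f ⟨hf, hDf⟩
    refine ⟨K.mul_mem_left c hf, fun D => ?_⟩
    rw [smul_eq_mul, Derivation.leibniz, smul_eq_mul, smul_eq_mul]
    exact K.add_mem (K.mul_mem_left c (hDf D)) (K.mul_mem_right (D c) hf)

theorem gc_deltaIdeal_deltaCore : GaloisConnection (deltaIdeal k (R := R)) (deltaCore k) := by
  intro J K
  constructor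
  · intro h f hf
    exact ⟨h (Ideal.mem_sup_left hf),
      fun D => h (Ideal.mem_sup_right (Ideal.subset_span ⟨D, f, hf, rfl⟩))⟩
  · intro h
    refine sup_le (fun f hf => (h hf).1) (Ideal.span_le.mpr ?_)
    rintro _ ⟨D, f, hf, rfl⟩
    exact (h hf).2 D

theorem deltaIdeal_mul_le (I J : Ideal R) :
    deltaIdeal k (I * J) ≤ I * deltaIdeal k J ⊔ deltaIdeal k I * J := by
  rw [gc_deltaIdeal_deltaCore, Submodule.mul_le]
  intro a ha b hb
  have hJ : J ≤ deltaIdeal k J := le_sup_left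
  have hDa (D : Derivation k R R) : D a ∈ deltaIdeal k I :=
    Ideal.mem_sup_right (Ideal.subset_span ⟨D, a, ha, rfl⟩)
  have hDb (D : Derivation k R R) : D b ∈ deltaIdeal k J :=
    Ideal.mem_sup_right (Ideal.subset_span ⟨D, b, hb, rfl⟩)
  refine ⟨Ideal.mem_sup_left (Ideal.mul_mem_mul ha (hJ hb)), fun D => ?_⟩
  rw [Derivation.leibniz, smul_eq_mul, smul_eq_mul, mul_comm b]
  exact Ideal.add_mem _ (Ideal.mem_sup_left (Ideal.mul_mem_mul ha (hDb D)))
    (Ideal.mem_sup_right (Ideal.mul_mem_mul (hDa D) hb))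

end Delta

section Interior

variable (k : Type*) {R : Type*} [CommRing k] [CommRing R] [Algebra k R] (A : ℕ → Ideal R)

def reesInterior : ℕ → Ideal R
  | 0 => ⊤
  | 1 => A 1
  | n + 2 => A (n + 2) ⊓ deltaCore k (reesInterior (n + 1))

variable {k A}

theorem le_reesInterior_add_two_iff {I : Ideal R} {n : ℕ} :
    I ≤ reesInterior k A (n + 2) ↔
      I ≤ A (n + 2) ∧ deltaIdeal k I ≤ reesInterior k A (n + 1) := by
  rw [gc_deltaIdeal_deltaCore]
  exact le_inf_iff

theorem coe_reesInterior_add_two (n : ℕ) :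
    (reesInterior k A (n + 2) : Set R) =
      {f | f ∈ A (n + 2) ∧ deltaIdeal k (Ideal.span {f}) ≤ reesInterior k A (n + 1)} := by
  ext f
  simp only [SetLike.mem_coe, Set.mem_ofPred_eq, ← Ideal.span_singleton_le_iff_mem,
    le_reesInterior_add_two_iff]

theorem reesInterior_succ_le : ∀ n, reesInterior k A (n + 1) ≤ A (n + 1)
  | 0 => le_rfl
  | _ + 1 => inf_le_left

theorem reesInterior_le (hA0 : A 0 = ⊤) : ∀ i, reesInterior k A i ≤ A i
  | 0 => hA0.ge
  | n + 1 => reesInterior_succ_le n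

theorem deltaIdeal_reesInterior_succ_le :
    ∀ i, deltaIdeal k (reesInterior k A (i + 1)) ≤ reesInterior k A i
  | 0 => le_top
  | _ + 1 => (le_reesInterior_add_two_iff.mp le_rfl).2

theorem reesInterior_mul_le (hAmul : ∀ i j, A i * A j ≤ A (i + j)) :
    ∀ i j, reesInterior k A i * reesInterior k A j ≤ reesInterior k A (i + j)
  | 0, j => by rw [reesInterior, Ideal.top_mul, zero_add]
  | i + 1, 0 => Ideal.mul_le_left
  | i + 1, j + 1 => by
    rw [show i + 1 + (j + 1) = i + j + 2 by omega, le_reesInterior_add_two_iff]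
    constructor
    · calc reesInterior k A (i + 1) * reesInterior k A (j + 1) ≤ A (i + 1) * A (j + 1) :=
            Ideal.mul_mono (reesInterior_succ_le i) (reesInterior_succ_le j)
        _ ≤ A (i + j + 2) :=
            (hAmul _ _).trans_eq (by rw [show i + 1 + (j + 1) = i + j + 2 by omega])
    · calc deltaIdeal k (reesInterior k A (i + 1) * reesInterior k A (j + 1))
          ≤ reesInterior k A (i + 1) * deltaIdeal k (reesInterior k A (j + 1)) ⊔
              deltaIdeal k (reesInterior k A (i + 1)) * reesInterior k A (j + 1) :=
            deltaIdeal_mul_le k _ _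
        _ ≤ reesInterior k A (i + 1) * reesInterior k A j ⊔
              reesInterior k A i * reesInterior k A (j + 1) :=
            sup_le_sup (Ideal.mul_mono_right (deltaIdeal_reesInterior_succ_le j))
              (Ideal.mul_mono_left (deltaIdeal_reesInterior_succ_le i))
        _ ≤ reesInterior k A (i + j + 1) :=
            sup_le ((reesInterior_mul_le hAmul (i + 1) j).trans_eq (by rw [Nat.add_right_comm]))
              (reesInterior_mul_le hAmul i (j + 1))
termination_by i j => i + j

theorem isVillamayor_reesInterior (hAmul : ∀ i j, A i * A j ≤ A (i + j)) :
    IsVillamayor k (reesInterior k A) :=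
  ⟨rfl, reesInterior_mul_le hAmul, deltaIdeal_reesInterior_succ_le⟩

theorem le_reesInterior {C : ℕ → Ideal R} (hC : ∀ i, deltaIdeal k (C (i + 1)) ≤ C i)
    (hCA : ∀ i, C i ≤ A i) : ∀ i, C i ≤ reesInterior k A i
  | 0 => le_top
  | 1 => hCA 1
  | n + 2 => le_reesInterior_add_two_iff.mpr
      ⟨hCA _, (hC (n + 1)).trans (le_reesInterior hC hCA _)⟩

end Interior

theorem interior_of_rees_algebra_general {k R : Type*} [Field k] [CommRing R] [Algebra k R]
    (A : ℕ → Ideal R) (hA0 : A 0 = ⊤) (hAmul : ∀ i j, A i * A j ≤ A (i + j)) :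
    ∃ B : ℕ → Ideal R,
      IsVillamayor k B ∧ (∀ i, B i ≤ A i) ∧
      -- B is the largest Villamayor algebra contained in A
      (∀ C : ℕ → Ideal R, IsVillamayor k C → (∀ i, C i ≤ A i) → ∀ i, C i ≤ B i) ∧
      -- degreewise characterization
      B 0 = ⊤ ∧ B 1 = A 1 ∧
      (∀ i : ℕ, 2 ≤ i →
        (B i : Set R) = {f | f ∈ A i ∧ deltaIdeal k (Ideal.span {f}) ≤ B (i - 1)}) := by
  refine ⟨reesInterior k A, isVillamayor_reesInterior hAmul, reesInterior_le hA0,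
    fun C hC hCA => le_reesInterior hC.2.2 hCA, rfl, rfl, fun i hi => ?_⟩
  obtain ⟨n, rfl⟩ : ∃ n, i = n + 2 := ⟨i - 2, by omega⟩
  exact coe_reesInterior_add_two n

/-- the interior `A°` of a Rees algebra `A`, defined degreewise by
`A°₀ = O_W`, `A°₁ = A₁` and, for `i > 1`,
`A°ᵢ = { f ∈ Aᵢ : Δ(f) ⊆ A°ᵢ₋₁ }`, is the largest Villamayor algebra contained
in `A` (equivalently, the Villamayor algebra generated by all Villamayor
algebras contained in `A`). -/
theorem interior_of_rees_algebra {k R : Type*} [Field k] [CharZero k] [CommRing R] [Algebra k R]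
    (A : ℕ → Ideal R) (hA0 : A 0 = ⊤) (hAmul : ∀ i j, A i * A j ≤ A (i + j)) :
    ∃ B : ℕ → Ideal R,
      IsVillamayor k B ∧ (∀ i, B i ≤ A i) ∧
      -- B is the largest Villamayor algebra contained in A
      (∀ C : ℕ → Ideal R, IsVillamayor k C → (∀ i, C i ≤ A i) → ∀ i, C i ≤ B i) ∧
      -- degreewise characterization
      B 0 = ⊤ ∧ B 1 = A 1 ∧
      (∀ i : ℕ, 2 ≤ i →
        (B i : Set R) = {f | f ∈ A i ∧ deltaIdeal k (Ideal.span {f}) ≤ B (i - 1)}) :=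
  interior_of_rees_algebra_general A hA0 hAmul
end

section
/- In the monomial case of the combinatorial game, an elementary blowup step strictly decreases the multiset of multiplicities of critical sets: if K is a minimal critical set (Σ_{h∈K} m(h) ≥ 1, minimal with this property among subsets having a common singular node below them) and we blow up, then each new critical set K_2', obtained from a critical superset K_2 ⊇ K by replacing some h ∈ K with the exceptional jib e carrying weight m(e) = Σ_{h'∈K} m(h') − 1, has strictly smaller multiplicity than K_2, since m(e) < m(h) for every h ∈ K. -/
theorem Finset.sum_sub_lt_of_sum_erase_lt {ι M : Type*} [DecidableEq ι] [AddCommGroup M]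
    [PartialOrder M] [IsOrderedAddMonoid M] {s : Finset ι} {f : ι → M} {c : M} {i : ι}
    (hi : i ∈ s) (h : ∑ j ∈ s.erase i, f j < c) : ∑ j ∈ s, f j - c < f i := by
  rwa [← Finset.add_sum_erase s f hi, add_sub_assoc, add_lt_iff_neg_left, sub_neg]

theorem new_critical_sets_have_smaller_multiplicity_general
    {ι : Type*} (H : Finset ι) (m : ι → ℚ)
    (K : Finset ι)
    (hmin : ∀ K' ⊂ K, ∑ h ∈ K', m h < 1) :
    (∀ h ∈ K, (∑ h' ∈ K, m h') - 1 < m h) ∧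
    ∀ K₂ : Finset ι, K₂ ⊆ H → K ⊆ K₂ → ∀ h ∈ K,
      ((∑ h' ∈ K₂, m h') - m h) + ((∑ h' ∈ K, m h') - 1) < ∑ h' ∈ K₂, m h' := by
  classical
  have exceptional_lt : ∀ h ∈ K, (∑ h' ∈ K, m h') - 1 < m h := fun h hh =>
    Finset.sum_sub_lt_of_sum_erase_lt hh (hmin _ (Finset.erase_ssubset hh))
  refine ⟨exceptional_lt, fun K₂ _ _ h hh => ?_⟩
  linarith [exceptional_lt h hh]

/-- multiplicity drop in the monomial case.  `H` is the finite set
of jibs with weight function `m : ι → ℚ≥0`.  A critical set is a `K ⊆ H` with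
`∑_{h∈K} m(h) ≥ 1`; `K` is minimal if no proper subset is critical.  After the
elementary blowup step for a minimal critical set `K`, the exceptional jib `e`
carries weight `m(e) = ∑_{h'∈K} m(h') − 1`, and every new critical set
`K₂' = (K₂ \ {h}) ∪ {e}`, for a critical `K₂ ⊇ K` and `h ∈ K`, has multiplicity
`∑_{K₂} m − m(h) + m(e)` strictly smaller than the multiplicity of `K₂`; indeed
`m(e) < m(h)` for every `h ∈ K`. -/
theorem new_critical_sets_have_smaller_multiplicity
    {ι : Type*} (H : Finset ι) (m : ι → ℚ) (hm : ∀ i, 0 ≤ m i)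
    (K : Finset ι) (hKH : K ⊆ H)
    (hcrit : 1 ≤ ∑ h ∈ K, m h)
    (hmin : ∀ K' ⊂ K, ∑ h ∈ K', m h < 1) :
    (∀ h ∈ K, (∑ h' ∈ K, m h') - 1 < m h) ∧
    ∀ K₂ : Finset ι, K₂ ⊆ H → K ⊆ K₂ → ∀ h ∈ K,
      ((∑ h' ∈ K₂, m h') - m h) + ((∑ h' ∈ K, m h') - 1) < ∑ h' ∈ K₂, m h' :=
  new_critical_sets_have_smaller_multiplicity_general H m K hmin
end
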